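/- arXiv:1704.08892 — 3 statements merged into one kernel-verified Lean document; each statement's English description precedes it below -/
import Mathlib

section
/- For any integer p ≠ 0, the matrices [[1, p], [2, 1 + 2p]] and [[1, p], [-2, 1 - 2p]] are not conjugate in GL(2, ℤ). -/
theorem stmt_2 (p : ℤ) (hp : p ≠ 0) :
    ¬ ∃ P : Matrix.GeneralLinearGroup (Fin 2) ℤ,
      (!![1, p; -2, 1 - 2 * p] : Matrix (Fin 2) (Fin 2) ℤ) =
        (P : Matrix (Fin 2) (Fin 2) ℤ) * !![1, p; 2, 1 + 2 * p] *
          ((P⁻¹ : Matrix.GeneralLinearGroup (Fin 2) ℤ) : Matrix (Fin 2) (Fin 2) ℤ) := by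
  rintro ⟨P, h⟩
  have ht := congrArg Matrix.trace h
  rw [Matrix.trace_mul_cycle] at ht
  have hinv : ((P⁻¹ : Matrix.GeneralLinearGroup (Fin 2) ℤ) : Matrix (Fin 2) (Fin 2) ℤ) *
      (P : Matrix (Fin 2) (Fin 2) ℤ) = 1 := P.inv_mul
  rw [hinv, one_mul] at ht
  simp [Matrix.trace_fin_two] at ht
  omega
end

section
/- For any integer p ≠ 0, the matrices [[1, p], [1, 1 + p]] and [[1, p], [-1, 1 - p]] are not conjugate in GL(2, ℤ). -/
theorem stmt_4 (p : ℤ) (hp : p ≠ 0) :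
    ¬ ∃ P : Matrix.GeneralLinearGroup (Fin 2) ℤ,
      (!![1, p; -1, 1 - p] : Matrix (Fin 2) (Fin 2) ℤ) =
        (P : Matrix (Fin 2) (Fin 2) ℤ) * !![1, p; 1, 1 + p] *
          ((P⁻¹ : Matrix.GeneralLinearGroup (Fin 2) ℤ) : Matrix (Fin 2) (Fin 2) ℤ) := by
  rintro ⟨P, h⟩
  have ht := congrArg Matrix.trace h
  rw [Matrix.trace_mul_cycle] at ht
  have hinv : ((P⁻¹ : Matrix.GeneralLinearGroup (Fin 2) ℤ) : Matrix (Fin 2) (Fin 2) ℤ) *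
      (P : Matrix (Fin 2) (Fin 2) ℤ) = 1 := by
    rw [← Units.val_mul, inv_mul_cancel, Units.val_one]
  rw [hinv, Matrix.one_mul] at ht
  simp [Matrix.trace_fin_two] at ht
  omega
end

section
/- The matrix [[-2, 3], [-3, 4]] is not conjugate in GL(2, ℤ) to [[1, 4], [1, 5]], and is not conjugate in GL(2, ℤ) to [[1, 4], [-1, -3]]. -/
theorem stmt_5 :
    (¬ ∃ P : Matrix.GeneralLinearGroup (Fin 2) ℤ,
      (!![1, 4; 1, 5] : Matrix (Fin 2) (Fin 2) ℤ) =
        (P : Matrix (Fin 2) (Fin 2) ℤ) * !![-2, 3; -3, 4] *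
          ((P⁻¹ : Matrix.GeneralLinearGroup (Fin 2) ℤ) : Matrix (Fin 2) (Fin 2) ℤ)) ∧
    (¬ ∃ P : Matrix.GeneralLinearGroup (Fin 2) ℤ,
      (!![1, 4; -1, -3] : Matrix (Fin 2) (Fin 2) ℤ) =
        (P : Matrix (Fin 2) (Fin 2) ℤ) * !![-2, 3; -3, 4] *
          ((P⁻¹ : Matrix.GeneralLinearGroup (Fin 2) ℤ) : Matrix (Fin 2) (Fin 2) ℤ)) := by
  constructor <;>
  · rintro ⟨P, hP⟩
    have h := congrArg Matrix.trace hP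
    rw [Matrix.trace_mul_comm, ← Matrix.mul_assoc] at h
    have h1 : ((P⁻¹ : Matrix.GeneralLinearGroup (Fin 2) ℤ) : Matrix (Fin 2) (Fin 2) ℤ) *
        (P : Matrix (Fin 2) (Fin 2) ℤ) = 1 := by
      have := congrArg (Units.val) (inv_mul_cancel P)
      simpa using this
    rw [h1, Matrix.one_mul] at h
    simp [Matrix.trace, Matrix.diag, Fin.sum_univ_two] at h
end
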